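/- arXiv:1212.5793 — 4 statements merged into one kernel-verified Lean document; each statement's English description precedes it below -/
import Mathlib

section
/- Let u : (0, r₀] → [0, ∞) be measurable with ∫₀^{r₀} u(r) dr < ∞, and let g be a C¹ function on the punctured disc D*(0, r₀) ⊂ ℂ such that |∇g(a)| ≤ u(|a|) for all a ∈ D*(0, r₀). Then g(a) has a (finite) limit as a → 0. -/
/-!
Two points `a`, `b` with `‖a‖, ‖b‖ < c/2` are joined through the circle of radius `ρ ∈ (c/2, c]`
by two radial segments and an arc. Along each ray `g` changes by at most `∫₀ᶜ u`, along the arc by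
at most `2πρ u(ρ)`; choosing `ρ` where `u` is at most its average over `(c/2, c]` bounds the latter
by `4π ∫₀ᶜ u`. Integrability of `u` makes `∫₀ᶜ u → 0` as `c → 0`, so `g` satisfies the Cauchy
criterion at the puncture.
-/

open MeasureTheory Set Filter Topology Metric Real

theorem exists_tendsto_nhdsWithin_of_forall_dist_lt {X Y : Type*} [PseudoMetricSpace X]
    [PseudoMetricSpace Y] [CompleteSpace Y] {f : X → Y} {s : Set X} {x : X}
    (h : ∀ ε > 0, ∃ δ > 0, ∀ y ∈ s ∩ ball x δ, ∀ z ∈ s ∩ ball x δ, dist (f y) (f z) < ε) :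
    ∃ L, Tendsto f (𝓝[s] x) (𝓝 L) := by
  rcases (𝓝[s] x).eq_or_neBot with hbot | hne
  · exact ⟨f x, hbot ▸ tendsto_bot⟩
  refine cauchy_map_iff_exists_tendsto.1 (Metric.cauchy_iff.2 ⟨map_neBot, fun ε hε => ?_⟩)
  obtain ⟨δ, hδ, hf⟩ := h ε hε
  refine ⟨f '' (s ∩ ball x δ), image_mem_map (inter_mem_nhdsWithin s (ball_mem_nhds x hδ)), ?_⟩
  rintro _ ⟨y, hy, rfl⟩ _ ⟨z, hz, rfl⟩
  exact hf y hy z hz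

theorem exists_mul_le_intervalIntegral {u : ℝ → ℝ} {a b : ℝ} (hab : a < b)
    (hu : IntervalIntegrable u volume a b) :
    ∃ ρ ∈ Ioc a b, (b - a) * u ρ ≤ ∫ t in a..b, u t := by
  obtain ⟨ρ, hρ, hle⟩ :=
    exists_le_setAverage (μ := volume) (by simp [hab]) (by simp) hu.1
  refine ⟨ρ, hρ, ?_⟩
  rwa [setAverage_eq, volume_real_Ioc_of_le hab.le, smul_eq_mul,
    le_inv_mul_iff₀ (sub_pos.2 hab), ← intervalIntegral.integral_of_le hab.le] at hle

theorem circleMap_zero_norm_arg (z : ℂ) : circleMap 0 ‖z‖ z.arg = z := by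
  rw [circleMap_zero, Complex.norm_mul_exp_arg_mul_I]

section Paths

variable {F : Type*} [NormedAddCommGroup F] [NormedSpace ℝ F]

theorem norm_comp_sub_le_integral_of_norm_fderiv_le {E : Type*} [NormedAddCommGroup E]
    [NormedSpace ℝ E] {g : E → F} {γ γ' : ℝ → E} {B : ℝ → ℝ} {a b : ℝ} (hab : a ≤ b)
    (hγ : ∀ t ∈ Icc a b, HasDerivAt γ (γ' t) t)
    (hg : ∀ t ∈ Icc a b, DifferentiableAt ℝ g (γ t))
    (hB : ∀ t ∈ Icc a b, ‖fderiv ℝ g (γ t)‖ * ‖γ' t‖ ≤ B t)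
    (hBi : IntervalIntegrable B volume a b) :
    ‖g (γ b) - g (γ a)‖ ≤ ∫ t in a..b, B t := by
  have hderiv : ∀ t ∈ Icc a b, HasDerivAt (g ∘ γ) (fderiv ℝ g (γ t) (γ' t)) t :=
    fun t ht => (hg t ht).hasFDerivAt.comp_hasDerivAt t (hγ t ht)
  refine norm_sub_le_integral_of_norm_deriv_le_of_le (f := g ∘ γ) hab
    (fun t ht => (hderiv t ht).continuousAt.continuousWithinAt)
    (fun t ht => (hderiv t (Ioo_subset_Icc_self ht)).differentiableAt.differentiableWithinAt)
    (ae_of_all _ fun t ht => ?_) hBi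
  rw [(hderiv t (Ioo_subset_Icc_self ht)).deriv]
  exact ((fderiv ℝ g (γ t)).le_opNorm _).trans (hB t (Ioo_subset_Icc_self ht))

theorem norm_sub_le_integral_along_ray {g : ℂ → F} {u : ℝ → ℝ} {θ r₁ r₂ : ℝ} (hr : r₁ ≤ r₂)
    (hg : ∀ r ∈ Icc r₁ r₂, DifferentiableAt ℝ g (circleMap 0 r θ))
    (hgu : ∀ r ∈ Icc r₁ r₂, ‖fderiv ℝ g (circleMap 0 r θ)‖ ≤ u r)
    (hu : IntervalIntegrable u volume r₁ r₂) :
    ‖g (circleMap 0 r₂ θ) - g (circleMap 0 r₁ θ)‖ ≤ ∫ r in r₁..r₂, u r := by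
  have hray (r : ℝ) : HasDerivAt (fun r : ℝ => circleMap 0 r θ) (circleMap 0 1 θ) r := by
    simpa [circleMap_zero] using
      (hasDerivAt_id r).ofReal_comp.mul_const (Complex.exp (θ * Complex.I))
  refine norm_comp_sub_le_integral_of_norm_fderiv_le hr (fun r _ => hray r) hg
    (fun r hr => ?_) hu
  simpa [norm_circleMap_zero] using hgu r hr

theorem norm_sub_le_of_mem_sphere {g : ℂ → F} {ρ C : ℝ} (hρ : 0 ≤ ρ)
    (hg : ∀ z ∈ sphere (0 : ℂ) ρ, DifferentiableAt ℝ g z)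
    (hC : ∀ z ∈ sphere (0 : ℂ) ρ, ‖fderiv ℝ g z‖ ≤ C) {z w : ℂ}
    (hz : z ∈ sphere 0 ρ) (hw : w ∈ sphere 0 ρ) :
    ‖g z - g w‖ ≤ 2 * π * ρ * C := by
  wlog harg : w.arg ≤ z.arg generalizing z w
  · rw [norm_sub_rev]
    exact this hw hz (le_of_not_ge harg)
  have hC₀ : 0 ≤ C := (norm_nonneg _).trans (hC z hz)
  have hmem (θ : ℝ) : circleMap 0 ρ θ ∈ sphere (0 : ℂ) ρ := circleMap_mem_sphere 0 hρ θ
  have hpolar : ∀ v ∈ sphere (0 : ℂ) ρ, circleMap 0 ρ v.arg = v := fun v hv => by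
    rw [← mem_sphere_zero_iff_norm.1 hv, circleMap_zero_norm_arg]
  have harc := norm_comp_sub_le_integral_of_norm_fderiv_le (B := fun _ => C * ρ) harg
    (fun θ _ => hasDerivAt_circleMap 0 ρ θ) (fun θ _ => hg _ (hmem θ)) (fun θ _ => ?_)
    intervalIntegrable_const
  · rw [hpolar z hz, hpolar w hw, intervalIntegral.integral_const, smul_eq_mul] at harc
    have hlen : z.arg - w.arg ≤ 2 * π := by
      linarith [Complex.arg_le_pi z, Complex.neg_pi_lt_arg w]
    calc ‖g z - g w‖ ≤ (z.arg - w.arg) * (C * ρ) := harc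
      _ ≤ 2 * π * (C * ρ) := by gcongr
      _ = 2 * π * ρ * C := by ring
  · rw [norm_mul, norm_circleMap_zero, Complex.norm_I, mul_one, abs_of_nonneg hρ]
    gcongr
    exact hC _ (hmem θ)

theorem norm_circleMap_arg_sub_le_integral {g : ℂ → F} {u : ℝ → ℝ} {c ρ : ℝ} {z : ℂ}
    (hg : ∀ w : ℂ, ‖w‖ ∈ Ioc 0 c → DifferentiableAt ℝ g w)
    (hgu : ∀ w : ℂ, ‖w‖ ∈ Ioc 0 c → ‖fderiv ℝ g w‖ ≤ u ‖w‖)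
    (hz : 0 < ‖z‖) (hzρ : ‖z‖ ≤ ρ) (hρ : ρ ≤ c) (hu : IntervalIntegrable u volume ‖z‖ ρ) :
    ‖g (circleMap 0 ρ z.arg) - g z‖ ≤ ∫ t in ‖z‖..ρ, u t := by
  have hnorm : ∀ r ∈ Icc ‖z‖ ρ, ‖circleMap 0 r z.arg‖ = r := fun r hr => by
    rw [norm_circleMap_zero, abs_of_pos (hz.trans_le hr.1)]
  have hmem : ∀ r ∈ Icc ‖z‖ ρ, ‖circleMap 0 r z.arg‖ ∈ Ioc 0 c := fun r hr => by
    rw [hnorm r hr]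
    exact ⟨hz.trans_le hr.1, hr.2.trans hρ⟩
  have hray := norm_sub_le_integral_along_ray hzρ (fun r hr => hg _ (hmem r hr))
    (fun r hr => by simpa only [hnorm r hr] using hgu _ (hmem r hr)) hu
  rwa [circleMap_zero_norm_arg] at hray

theorem norm_sub_le_mul_integral_of_norm_fderiv_le {g : ℂ → F} {u : ℝ → ℝ} {c : ℝ}
    (hg : ∀ z : ℂ, ‖z‖ ∈ Ioc 0 c → DifferentiableAt ℝ g z)
    (hgu : ∀ z : ℂ, ‖z‖ ∈ Ioc 0 c → ‖fderiv ℝ g z‖ ≤ u ‖z‖)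
    (hu : IntervalIntegrable u volume 0 c) {a b : ℂ} (ha : ‖a‖ ∈ Ioo 0 (c / 2))
    (hb : ‖b‖ ∈ Ioo 0 (c / 2)) :
    ‖g a - g b‖ ≤ (2 + 4 * π) * ∫ t in 0..c, u t := by
  have hc : 0 < c := by linarith [ha.1, ha.2]
  have hu_nonneg : ∀ r ∈ Ioc 0 c, 0 ≤ u r := fun r hr => by
    have hr' : ‖(r : ℂ)‖ = r := by simp [abs_of_pos hr.1]
    have := hgu r (hr'.symm ▸ hr)
    rw [hr'] at this
    exact (norm_nonneg _).trans this
  have hmono {x y : ℝ} (hx : 0 ≤ x) (hxy : x ≤ y) (hy : y ≤ c) :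
      ∫ t in x..y, u t ≤ ∫ t in 0..c, u t :=
    intervalIntegral.integral_mono_interval hx hxy hy
      ((ae_restrict_iff' measurableSet_Ioc).2 (ae_of_all _ hu_nonneg)) hu
  have hsub {x y : ℝ} (hx : 0 ≤ x) (hxy : x ≤ y) (hy : y ≤ c) :
      IntervalIntegrable u volume x y :=
    hu.mono_set (by
      rw [uIcc_of_le hxy, uIcc_of_le (hx.trans (hxy.trans hy))]
      exact Icc_subset_Icc hx hy)
  obtain ⟨ρ, ⟨hρ₁, hρ₂⟩, hρu⟩ := exists_mul_le_intervalIntegral (by linarith : c / 2 < c)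
    (hsub (by linarith) (by linarith) le_rfl)
  have hρ : 0 < ρ := by linarith
  have hradial {z : ℂ} (hz : ‖z‖ ∈ Ioo 0 (c / 2)) :
      ‖g (circleMap 0 ρ z.arg) - g z‖ ≤ ∫ t in 0..c, u t := by
    have hzρ : ‖z‖ ≤ ρ := (hz.2.trans hρ₁).le
    exact (norm_circleMap_arg_sub_le_integral hg hgu hz.1 hzρ hρ₂ (hsub hz.1.le hzρ hρ₂)).trans
      (hmono hz.1.le hzρ hρ₂)
  have hsphere : ∀ z ∈ sphere (0 : ℂ) ρ, ‖z‖ ∈ Ioc 0 c := fun z hz => by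
    rw [mem_sphere_zero_iff_norm.1 hz]
    exact ⟨hρ, hρ₂⟩
  set a' := circleMap 0 ρ a.arg
  set b' := circleMap 0 ρ b.arg
  have hcircle : ‖g a' - g b'‖ ≤ 4 * π * ∫ t in 0..c, u t :=
    calc ‖g a' - g b'‖ ≤ 2 * π * ρ * u ρ :=
          norm_sub_le_of_mem_sphere hρ.le (fun z hz => hg z (hsphere z hz))
            (fun z hz => by simpa only [mem_sphere_zero_iff_norm.1 hz] using hgu z (hsphere z hz))
            (circleMap_mem_sphere 0 hρ.le _) (circleMap_mem_sphere 0 hρ.le _)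
      _ ≤ 2 * π * c * u ρ := by gcongr; exact hu_nonneg ρ ⟨hρ, hρ₂⟩
      _ = 4 * π * ((c - c / 2) * u ρ) := by ring
      _ ≤ 4 * π * ∫ t in c / 2..c, u t := by gcongr
      _ ≤ 4 * π * ∫ t in 0..c, u t := by gcongr; exact hmono (by linarith) (by linarith) le_rfl
  calc ‖g a - g b‖ ≤ ‖g a - g a'‖ + (‖g a' - g b'‖ + ‖g b' - g b‖) := by
        grw [norm_sub_le_norm_sub_add_norm_sub (g a) (g a'),
          norm_sub_le_norm_sub_add_norm_sub (g a')]
    _ ≤ (∫ t in 0..c, u t) + (4 * π * (∫ t in 0..c, u t) + ∫ t in 0..c, u t) := by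
        gcongr
        · rw [norm_sub_rev]
          exact hradial ha
        · exact hradial hb
    _ = (2 + 4 * π) * ∫ t in 0..c, u t := by ring

end Paths

theorem stmt1_general (r₀ : ℝ) (hr₀ : 0 < r₀) (u : ℝ → ℝ)
    (hu_int : IntegrableOn u (Ioc 0 r₀))
    (g : ℂ → ℂ)
    (hg_C1 : ContDiffOn ℝ 1 g {a : ℂ | 0 < ‖a‖ ∧ ‖a‖ < r₀})
    (hg_deriv : ∀ a ∈ {a : ℂ | 0 < ‖a‖ ∧ ‖a‖ < r₀},
      ‖fderiv ℝ g a‖ ≤ u (‖a‖)) :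
    ∃ L : ℂ, Tendsto g (𝓝[{a : ℂ | 0 < ‖a‖ ∧ ‖a‖ < r₀}] 0) (𝓝 L) := by
  have hopen : IsOpen {a : ℂ | 0 < ‖a‖ ∧ ‖a‖ < r₀} := isOpen_Ioo.preimage continuous_norm
  have hg (a : ℂ) (ha : a ∈ {a : ℂ | 0 < ‖a‖ ∧ ‖a‖ < r₀}) : DifferentiableAt ℝ g a :=
    (hg_C1.differentiableOn one_ne_zero a ha).differentiableAt (hopen.mem_nhds ha)
  have hu : IntervalIntegrable u volume 0 r₀ :=
    (intervalIntegrable_iff_integrableOn_Ioc_of_le hr₀.le).2 hu_int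
  have hsmall : Tendsto (fun c => ∫ t in 0..c, u t) (𝓝[>] 0) (𝓝 0) := by
    have := (intervalIntegral.continuousOn_primitive_interval' hu left_mem_uIcc 0
      left_mem_uIcc).tendsto
    rw [intervalIntegral.integral_same] at this
    exact this.mono_left (nhdsWithin_le_of_mem (by
      rw [uIcc_of_le hr₀.le]; exact Icc_mem_nhdsGT hr₀))
  refine exists_tendsto_nhdsWithin_of_forall_dist_lt fun ε hε => ?_
  obtain ⟨c, hcε, hc₀, hcr₀⟩ := ((hsmall.eventually
    (gt_mem_nhds (by positivity : 0 < ε / (2 + 4 * π)))).and (Ioo_mem_nhdsGT hr₀)).exists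
  refine ⟨c / 2, by positivity, fun a ha b hb => ?_⟩
  rw [dist_eq_norm]
  calc ‖g a - g b‖ ≤ (2 + 4 * π) * ∫ t in 0..c, u t :=
        norm_sub_le_mul_integral_of_norm_fderiv_le
          (fun z hz => hg z ⟨hz.1, hz.2.trans_lt hcr₀⟩)
          (fun z hz => hg_deriv z ⟨hz.1, hz.2.trans_lt hcr₀⟩)
          (hu.mono_set (uIcc_subset_uIcc left_mem_uIcc (by
            rw [uIcc_of_le hr₀.le]
            exact ⟨hc₀.le, hcr₀.le⟩)))
          ⟨ha.1.1, by simpa using ha.2⟩ ⟨hb.1.1, by simpa using hb.2⟩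
    _ < ε := by rwa [lt_div_iff₀' (by positivity)] at hcε

theorem stmt1 (r₀ : ℝ) (hr₀ : 0 < r₀) (u : ℝ → ℝ)
    (hu_meas : Measurable u) (hu_nonneg : ∀ r ∈ Ioc (0:ℝ) r₀, 0 ≤ u r)
    (hu_int : IntegrableOn u (Ioc 0 r₀))
    (g : ℂ → ℂ)
    (hg_C1 : ContDiffOn ℝ 1 g {a : ℂ | 0 < ‖a‖ ∧ ‖a‖ < r₀})
    (hg_deriv : ∀ a ∈ {a : ℂ | 0 < ‖a‖ ∧ ‖a‖ < r₀},
      ‖fderiv ℝ g a‖ ≤ u (‖a‖)) :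
    ∃ L : ℂ, Tendsto g (𝓝[{a : ℂ | 0 < ‖a‖ ∧ ‖a‖ < r₀}] 0) (𝓝 L) :=
  stmt1_general r₀ hr₀ u hu_int g hg_C1 hg_deriv
end

section
/- Let ν : (0, R) → ℝ be a nondecreasing nonnegative function with limit ν(0⁺) = lim_{r→0⁺} ν(r). If ∫₀^{r₀} (ν(r) − ν(0⁺))/r dr < ∞ for some 0 < r₀ < R, then ∫₀^{r₀} (ν(r) − ν(r/2))/r · |log r| dr < ∞. -/
open MeasureTheory Set Filter Topology
open scoped ENNReal

/-!
Put `f = ν - ν(0⁺) ≥ 0` and `Φ(ρ) = ∫₀^ρ f(r)/r dr`. Since `dr/r` is dilation invariant,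
`∫₀^ρ (f(r) - f(r/2))/r dr = Φ(ρ) - Φ(ρ/2)`, so the integrals of `(f(r) - f(r/2))/r` over the
intervals `(0, r₀/2^j)` telescope to at most `Φ(r₀)`. As `log(r₀/r) ≤ log 2 · #{j | r < r₀/2^j}`,
the integral of `(f(r) - f(r/2))/r · log(r₀/r)` is at most `log 2 · Φ(r₀)`, and
`|log r| ≤ |log r₀| + log(r₀/r)` finishes the proof.
-/

theorem MonotoneOn.le_of_tendsto_nhdsGT {α β : Type*} [LinearOrder α] [TopologicalSpace α]
    [OrderTopology α] [DenselyOrdered α] [Preorder β] [TopologicalSpace β]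
    [ClosedIicTopology β] {f : α → β} {a b : α} {l : β} (hf : MonotoneOn f (Ioo a b))
    (hl : Tendsto f (𝓝[>] a) (𝓝 l)) {x : α} (hx : x ∈ Ioo a b) : l ≤ f x := by
  have : (𝓝[>] a).NeBot := nhdsGT_neBot_of_exists_gt ⟨x, hx.1⟩
  refine le_of_tendsto hl ?_
  filter_upwards [Ioo_mem_nhdsGT hx.1] with y hy
  exact hf ⟨hy.1, hy.2.trans hx.2⟩ hx hy.2.le

theorem ENNReal.tsum_le_of_add_succ_le {s Φ : ℕ → ℝ≥0∞} (h : ∀ n, s n + Φ (n + 1) ≤ Φ n) :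
    ∑' n, s n ≤ Φ 0 := by
  have partial_le : ∀ N, ∑ n ∈ Finset.range N, s n + Φ N ≤ Φ 0 := by
    intro N
    induction N with
    | zero => simp
    | succ N ih =>
      calc ∑ n ∈ Finset.range (N + 1), s n + Φ (N + 1)
          = ∑ n ∈ Finset.range N, s n + (s N + Φ (N + 1)) := by
            rw [Finset.sum_range_succ, add_assoc]
        _ ≤ Φ 0 := le_trans (by gcongr; exact h N) ih
  exact ENNReal.tsum_le_of_sum_range_le fun N => le_self_add.trans (partial_le N)

theorem setLIntegral_comp_mul_left (G : ℝ → ℝ≥0∞) {c : ℝ} (hc : c ≠ 0) (s : Set ℝ) :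
    ∫⁻ x in s, G (c * x) = ENNReal.ofReal |c⁻¹| * ∫⁻ y in (c * ·) '' s, G y := by
  have hmp : MeasurePreserving (c * ·) volume (ENNReal.ofReal |c⁻¹| • volume) :=
    ⟨measurable_const_mul c, Real.map_volume_mul_left hc⟩
  rw [hmp.setLIntegral_comp_emb (measurableEmbedding_mulLeft₀ hc), Measure.restrict_smul,
    lintegral_smul_measure, smul_eq_mul]

/-- The measure `dx / x` on `(0, ∞)` is invariant under dilations. -/
theorem lintegral_Ioo_comp_div_div_self (g : ℝ → ℝ) {c : ℝ} (hc : 0 < c) (ρ : ℝ) :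
    ∫⁻ x in Ioo 0 ρ, ENNReal.ofReal (g (x / c) / x)
      = ∫⁻ y in Ioo 0 (ρ / c), ENNReal.ofReal (g y / y) := by
  have hrescale : ∀ x, ENNReal.ofReal (g (x / c) / x)
      = ENNReal.ofReal c⁻¹ * ENNReal.ofReal (g (c⁻¹ * x) / (c⁻¹ * x)) := by
    intro x
    rw [← ENNReal.ofReal_mul (inv_nonneg.2 hc.le), div_eq_inv_mul x c]
    rcases eq_or_ne x 0 with rfl | hx
    · simp
    · field_simp
  simp_rw [hrescale]
  rw [lintegral_const_mul' _ _ ENNReal.ofReal_ne_top,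
    setLIntegral_comp_mul_left (fun y => ENNReal.ofReal (g y / y)) (inv_ne_zero hc.ne'),
    image_mul_left_Ioo (inv_pos.2 hc), ← mul_assoc, ← ENNReal.ofReal_mul (inv_nonneg.2 hc.le),
    inv_inv, abs_of_pos hc, inv_mul_cancel₀ hc.ne', ENNReal.ofReal_one, one_mul, mul_zero,
    inv_mul_eq_div]

theorem ofReal_log_div_le_log_two_mul_tsum_indicator {a r : ℝ} (ha : 0 < a) (hr : 0 < r) :
    ENNReal.ofReal (Real.log (a / r))
      ≤ ENNReal.ofReal (Real.log 2) * ∑' j : ℕ, (Ioo 0 (a / 2 ^ j)).indicator 1 r := by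
  set m := ⌈Real.logb 2 (a / r)⌉₊
  have hmem : ∀ j < m, r ∈ Ioo 0 (a / 2 ^ j) := by
    intro j hj
    have h2j : (2 : ℝ) ^ (j : ℝ) < a / r :=
      (Real.lt_logb_iff_rpow_lt one_lt_two (div_pos ha hr)).1 (Nat.lt_ceil.1 hj)
    rw [Real.rpow_natCast, lt_div_iff₀ hr] at h2j
    exact ⟨hr, (lt_div_iff₀ (by positivity)).2 (by linarith)⟩
  calc ENNReal.ofReal (Real.log (a / r))
      = ENNReal.ofReal (Real.log 2 * Real.logb 2 (a / r)) := by
        rw [← Real.log_div_log, mul_div_cancel₀ _ (Real.log_pos one_lt_two).ne']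
    _ ≤ ENNReal.ofReal (Real.log 2 * m) := by
        gcongr
        exact Nat.le_ceil _
    _ = ENNReal.ofReal (Real.log 2)
          * ∑ j ∈ Finset.range m, (Ioo 0 (a / 2 ^ j)).indicator 1 r := by
        rw [ENNReal.ofReal_mul (Real.log_pos one_lt_two).le, ENNReal.ofReal_natCast,
          Finset.sum_congr rfl fun j hj => indicator_of_mem (hmem j (Finset.mem_range.1 hj)) _]
        simp
    _ ≤ _ := by gcongr; exact ENNReal.sum_le_tsum _

section DyadicDifference

variable {f : ℝ → ℝ} {a : ℝ}

theorem aemeasurable_sub_comp_half_div (hf : MonotoneOn f (Ioo 0 a)) :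
    AEMeasurable (fun r => (f r - f (r / 2)) / r) (volume.restrict (Ioo 0 a)) := by
  have hhalf : MonotoneOn (fun r => f (r / 2)) (Ioo 0 a) := fun x hx y hy hxy =>
    hf ⟨half_pos hx.1, by linarith [hx.1, hx.2]⟩ ⟨half_pos hy.1, by linarith [hy.1, hy.2]⟩
      (by linarith)
  exact ((aemeasurable_restrict_of_monotoneOn measurableSet_Ioo hf).sub
    (aemeasurable_restrict_of_monotoneOn measurableSet_Ioo hhalf)).div aemeasurable_id

theorem sub_comp_half_div_mem_Icc (hf : MonotoneOn f (Ioo 0 a))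
    (hf₀ : ∀ r ∈ Ioo 0 a, 0 ≤ f r) {r : ℝ} (hr : r ∈ Ioo 0 a) :
    (f r - f (r / 2)) / r ∈ Icc 0 (f r / r) := by
  have hr2 : r / 2 ∈ Ioo 0 a := ⟨half_pos hr.1, by linarith [hr.1, hr.2]⟩
  exact ⟨div_nonneg (sub_nonneg.2 (hf hr2 hr (by linarith [hr.1]))) hr.1.le,
    div_le_div_of_nonneg_right (sub_le_self _ (hf₀ _ hr2)) hr.1.le⟩

theorem lintegral_sub_comp_half_div_add (hf : MonotoneOn f (Ioo 0 a))
    (hf₀ : ∀ r ∈ Ioo 0 a, 0 ≤ f r) {ρ : ℝ} (hρ : ρ ≤ a) :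
    (∫⁻ r in Ioo 0 ρ, ENNReal.ofReal ((f r - f (r / 2)) / r))
      + ∫⁻ r in Ioo 0 (ρ / 2), ENNReal.ofReal (f r / r)
      = ∫⁻ r in Ioo 0 ρ, ENNReal.ofReal (f r / r) := by
  have hmeas : AEMeasurable (fun r => ENNReal.ofReal ((f r - f (r / 2)) / r))
      (volume.restrict (Ioo 0 ρ)) :=
    ((aemeasurable_sub_comp_half_div hf).mono_measure
      (Measure.restrict_mono (Ioo_subset_Ioo le_rfl hρ) le_rfl)).ennreal_ofReal
  rw [← lintegral_Ioo_comp_div_div_self f two_pos, ← lintegral_add_left' hmeas]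
  refine setLIntegral_congr_fun measurableSet_Ioo fun r hr => ?_
  have hr' : r ∈ Ioo 0 a := ⟨hr.1, hr.2.trans_le hρ⟩
  have hr2 : r / 2 ∈ Ioo 0 a := ⟨half_pos hr.1, by linarith [hr'.2, hr.1]⟩
  rw [← ENNReal.ofReal_add (sub_comp_half_div_mem_Icc hf hf₀ hr').1
    (div_nonneg (hf₀ _ hr2) hr.1.le), ← add_div, sub_add_cancel]

theorem lintegral_sub_comp_half_div_mul_log_le (hf : MonotoneOn f (Ioo 0 a))
    (hf₀ : ∀ r ∈ Ioo 0 a, 0 ≤ f r) (ha : 0 < a) :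
    ∫⁻ r in Ioo 0 a, ENNReal.ofReal ((f r - f (r / 2)) / r) * ENNReal.ofReal (Real.log (a / r))
      ≤ ENNReal.ofReal (Real.log 2) * ∫⁻ r in Ioo 0 a, ENNReal.ofReal (f r / r) := by
  set q : ℝ → ℝ≥0∞ := fun r => ENNReal.ofReal ((f r - f (r / 2)) / r)
  have hdyadic_le (j : ℕ) : a / 2 ^ j ≤ a := div_le_self ha.le (one_le_pow₀ one_le_two)
  have hq : AEMeasurable q (volume.restrict (Ioo 0 a)) :=
    (aemeasurable_sub_comp_half_div hf).ennreal_ofReal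
  calc ∫⁻ r in Ioo 0 a, q r * ENNReal.ofReal (Real.log (a / r))
      ≤ ∫⁻ r in Ioo 0 a, ENNReal.ofReal (Real.log 2)
          * ∑' j : ℕ, (Ioo 0 (a / 2 ^ j)).indicator q r := by
        refine setLIntegral_mono' measurableSet_Ioo fun r hr => ?_
        calc q r * ENNReal.ofReal (Real.log (a / r))
            ≤ q r * (ENNReal.ofReal (Real.log 2)
                * ∑' j : ℕ, (Ioo 0 (a / 2 ^ j)).indicator 1 r) := by
              gcongr
              exact ofReal_log_div_le_log_two_mul_tsum_indicator ha hr.1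
          _ = _ := by
              rw [mul_left_comm, ← ENNReal.tsum_mul_left]
              congr 2 with j
              by_cases hj : r ∈ Ioo 0 (a / 2 ^ j) <;> simp [hj]
    _ = ENNReal.ofReal (Real.log 2) * ∑' j : ℕ, ∫⁻ r in Ioo 0 (a / 2 ^ j), q r := by
        rw [lintegral_const_mul' _ _ ENNReal.ofReal_ne_top,
          lintegral_tsum fun j => hq.indicator measurableSet_Ioo]
        congr 2 with j
        rw [lintegral_indicator measurableSet_Ioo, Measure.restrict_restrict measurableSet_Ioo,
          inter_eq_self_of_subset_left (Ioo_subset_Ioo le_rfl (hdyadic_le j))]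
    _ ≤ _ := by
        gcongr
        have htelescope := ENNReal.tsum_le_of_add_succ_le
          (Φ := fun j : ℕ => ∫⁻ r in Ioo 0 (a / 2 ^ j), ENNReal.ofReal (f r / r)) fun j => by
            rw [pow_succ, ← div_div]
            exact (lintegral_sub_comp_half_div_add hf hf₀ (hdyadic_le j)).le
        simpa using htelescope

theorem integrableOn_sub_comp_half_div (hf : MonotoneOn f (Ioo 0 a))
    (hf₀ : ∀ r ∈ Ioo 0 a, 0 ≤ f r) (hint : IntegrableOn (fun r => f r / r) (Ioo 0 a)) :
    IntegrableOn (fun r => (f r - f (r / 2)) / r) (Ioo 0 a) := by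
  refine hint.mono' (aemeasurable_sub_comp_half_div hf).aestronglyMeasurable ?_
  filter_upwards [ae_restrict_mem measurableSet_Ioo] with r hr
  obtain ⟨hnonneg, hle⟩ := sub_comp_half_div_mem_Icc hf hf₀ hr
  rwa [Real.norm_of_nonneg hnonneg]

theorem integrableOn_sub_comp_half_div_mul_log (hf : MonotoneOn f (Ioo 0 a))
    (hf₀ : ∀ r ∈ Ioo 0 a, 0 ≤ f r) (ha : 0 < a)
    (hint : IntegrableOn (fun r => f r / r) (Ioo 0 a)) :
    IntegrableOn (fun r => (f r - f (r / 2)) / r * Real.log (a / r)) (Ioo 0 a) := by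
  have hprod : 0 ≤ᵐ[volume.restrict (Ioo 0 a)]
      fun r => (f r - f (r / 2)) / r * Real.log (a / r) :=
    (ae_restrict_mem measurableSet_Ioo).mono fun r hr =>
      mul_nonneg (sub_comp_half_div_mem_Icc hf hf₀ hr).1
        (Real.log_nonneg ((one_le_div hr.1).2 hr.2.le))
  have hΦ : 0 ≤ᵐ[volume.restrict (Ioo 0 a)] fun r => f r / r :=
    (ae_restrict_mem measurableSet_Ioo).mono fun r hr => div_nonneg (hf₀ r hr) hr.1.le
  refine ⟨((aemeasurable_sub_comp_half_div hf).mul (by fun_prop)).aestronglyMeasurable, ?_⟩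
  rw [hasFiniteIntegral_iff_ofReal hprod]
  calc ∫⁻ r in Ioo 0 a, ENNReal.ofReal ((f r - f (r / 2)) / r * Real.log (a / r))
      = ∫⁻ r in Ioo 0 a,
          ENNReal.ofReal ((f r - f (r / 2)) / r) * ENNReal.ofReal (Real.log (a / r)) :=
        setLIntegral_congr_fun measurableSet_Ioo fun r hr =>
          ENNReal.ofReal_mul (sub_comp_half_div_mem_Icc hf hf₀ hr).1
    _ ≤ ENNReal.ofReal (Real.log 2) * ∫⁻ r in Ioo 0 a, ENNReal.ofReal (f r / r) :=
        lintegral_sub_comp_half_div_mul_log_le hf hf₀ ha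
    _ < ⊤ := ENNReal.mul_lt_top ENNReal.ofReal_lt_top
        ((hasFiniteIntegral_iff_ofReal hΦ).1 hint.2)

theorem abs_log_le_abs_log_add_log_div {a r : ℝ} (hr : 0 < r) (hra : r ≤ a) :
    |Real.log r| ≤ |Real.log a| + Real.log (a / r) := by
  rw [Real.log_div (hr.trans_le hra).ne' hr.ne']
  calc |Real.log r| = |Real.log a - (Real.log a - Real.log r)| := by ring_nf
    _ ≤ |Real.log a| + |Real.log a - Real.log r| := abs_sub _ _
    _ = |Real.log a| + (Real.log a - Real.log r) := by
      rw [abs_of_nonneg (sub_nonneg.2 (Real.log_le_log hr hra))]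

theorem integrableOn_sub_comp_half_div_mul_abs_log (hf : MonotoneOn f (Ioo 0 a))
    (hf₀ : ∀ r ∈ Ioo 0 a, 0 ≤ f r) (ha : 0 < a)
    (hint : IntegrableOn (fun r => f r / r) (Ioo 0 a)) :
    IntegrableOn (fun r => (f r - f (r / 2)) / r * |Real.log r|) (Ioo 0 a) := by
  refine (((integrableOn_sub_comp_half_div hf hf₀ hint).const_mul |Real.log a|).add
    (integrableOn_sub_comp_half_div_mul_log hf hf₀ ha hint)).mono'
    ((aemeasurable_sub_comp_half_div hf).mul (by fun_prop)).aestronglyMeasurable ?_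
  filter_upwards [ae_restrict_mem measurableSet_Ioo] with r hr
  have hnonneg := (sub_comp_half_div_mem_Icc hf hf₀ hr).1
  rw [Real.norm_of_nonneg (mul_nonneg hnonneg (abs_nonneg _))]
  calc (f r - f (r / 2)) / r * |Real.log r|
      ≤ (f r - f (r / 2)) / r * (|Real.log a| + Real.log (a / r)) :=
        mul_le_mul_of_nonneg_left (abs_log_le_abs_log_add_log_div hr.1 hr.2.le) hnonneg
    _ = _ := by simp only [Pi.add_apply]; ring

end DyadicDifference

theorem stmt2_general (R r₀ ν₀ : ℝ) (hr₀ : 0 < r₀) (hr₀R : r₀ < R)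
    (ν : ℝ → ℝ) (hmono : MonotoneOn ν (Ioo 0 R))
    (hlim : Tendsto ν (𝓝[>] 0) (𝓝 ν₀))
    (hint : IntegrableOn (fun r => (ν r - ν₀) / r) (Ioo 0 r₀)) :
    IntegrableOn (fun r => (ν r - ν (r / 2)) / r * |Real.log r|) (Ioo 0 r₀) := by
  have hmono₀ : MonotoneOn ν (Ioo 0 r₀) := hmono.mono (Ioo_subset_Ioo_right hr₀R.le)
  have hf : MonotoneOn (fun r => ν r - ν₀) (Ioo 0 r₀) := fun x hx y hy hxy =>
    sub_le_sub_right (hmono₀ hx hy hxy) ν₀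
  have hf₀ : ∀ r ∈ Ioo 0 r₀, 0 ≤ ν r - ν₀ := fun r hr =>
    sub_nonneg.2 (hmono₀.le_of_tendsto_nhdsGT hlim hr)
  simpa only [sub_sub_sub_cancel_right] using
    integrableOn_sub_comp_half_div_mul_abs_log hf hf₀ hr₀ hint

theorem stmt2 (R r₀ ν₀ : ℝ) (hr₀ : 0 < r₀) (hr₀R : r₀ < R)
    (ν : ℝ → ℝ) (hmono : MonotoneOn ν (Ioo 0 R))
    (hnonneg : ∀ r ∈ Ioo (0:ℝ) R, 0 ≤ ν r)
    (hlim : Tendsto ν (𝓝[>] 0) (𝓝 ν₀))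
    (hint : IntegrableOn (fun r => (ν r - ν₀) / r) (Ioo 0 r₀)) :
    IntegrableOn (fun r => (ν r - ν (r / 2)) / r * |Real.log r|) (Ioo 0 r₀) :=
  stmt2_general R r₀ ν₀ hr₀ hr₀R ν hmono hlim hint
end

section
/- Let ν : (0, R) → ℝ be a nondecreasing nonnegative function with limit ν(0⁺) = lim_{r→0⁺} ν(r). If ∫₀^{r₀} (ν(r) − ν(r/2))/r · |log r| dr < ∞ for some 0 < r₀ < min(R, 1), then ∫₀^{r₀} (ν(r) − ν(0⁺))/r dr < ∞. -/
/-!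
Telescoping along the dyadic sequence `r / 2 ^ k` writes `ν r - ν₀` as the sum of the
increments `ν (r / 2 ^ k) - ν (r / 2 ^ (k + 1))`. Since the measure `dr / r` is dilation
invariant, the `k`-th increment integrates over `(0, r₀)` to the integral of
`(ν s - ν (s / 2)) / s` over `(0, r₀ / 2 ^ k)`. A point `s` lies in at most
`⌈log₂ (r₀ / s)⌉ ≲ |log s|` of these intervals, so summing over `k` bounds
`∫₀^{r₀} (ν r - ν₀) / r dr` by a multiple of the finite integral in the hypothesis.
-/

open MeasureTheory Set Filter Topology
open scoped ENNReal

theorem lintegral_Ioo_comp_div {c : ℝ} (hc : 0 < c) (b : ℝ) (G : ℝ → ℝ≥0∞) :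
    ∫⁻ r in Ioo 0 b, G (r / c) = ENNReal.ofReal c * ∫⁻ s in Ioo 0 (b / c), G s := by
  have hc' : c⁻¹ ≠ 0 := inv_ne_zero hc.ne'
  have hscale : MeasurePreserving (· * c⁻¹) volume (ENNReal.ofReal c • volume) :=
    ⟨measurable_mul_const _, by rw [Real.map_volume_mul_right hc', inv_inv, abs_of_pos hc]⟩
  have hpre : (· * c⁻¹) ⁻¹' Ioo 0 (b / c) = Ioo 0 b := by
    ext r
    simp [← div_eq_mul_inv, div_lt_div_iff_of_pos_right hc, div_pos_iff_of_pos_right hc]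
  conv_lhs => simp only [div_eq_mul_inv _ c]
  rw [← hpre, hscale.setLIntegral_comp_preimage_emb (measurableEmbedding_mulRight₀ hc'),
    Measure.restrict_smul, lintegral_smul_measure, smul_eq_mul]

theorem lintegral_Ioo_ofReal_comp_div_div {c : ℝ} (hc : 0 < c) (b : ℝ) (F : ℝ → ℝ) :
    ∫⁻ r in Ioo 0 b, ENNReal.ofReal (F (r / c) / r) =
      ∫⁻ s in Ioo 0 (b / c), ENNReal.ofReal (F s / s) := by
  have hc' : 0 ≤ c⁻¹ := inv_nonneg.2 hc.le
  have hscale (r : ℝ) : ENNReal.ofReal (F (r / c) / r) =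
      ENNReal.ofReal c⁻¹ * ENNReal.ofReal (F (r / c) / (r / c)) := by
    rw [← ENNReal.ofReal_mul hc', div_div_eq_mul_div]
    field_simp
  simp_rw [hscale]
  rw [lintegral_const_mul' _ _ ENNReal.ofReal_ne_top,
    lintegral_Ioo_comp_div hc b fun s => ENNReal.ofReal (F s / s), ← mul_assoc,
    ← ENNReal.ofReal_mul hc', inv_mul_cancel₀ hc.ne', ENNReal.ofReal_one, one_mul]

theorem tendsto_div_two_pow_nhdsGT_zero {r : ℝ} (hr : 0 < r) :
    Tendsto (fun n : ℕ => r / 2 ^ n) atTop (𝓝[>] 0) :=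
  tendsto_nhdsWithin_iff.2
    ⟨tendsto_const_nhds.div_atTop (tendsto_pow_atTop_atTop_of_one_lt one_lt_two),
      .of_forall fun n => div_pos hr (pow_pos two_pos n)⟩

theorem div_mem_Ioo_of_one_le {r c R : ℝ} (hr : r ∈ Ioo 0 R) (hc : 1 ≤ c) :
    r / c ∈ Ioo 0 R :=
  ⟨div_pos hr.1 (one_pos.trans_le hc), (div_le_self hr.1.le hc).trans_lt hr.2⟩

namespace MonotoneOn

variable {ν : ℝ → ℝ} {R ν₀ : ℝ}

theorem le_of_tendsto_nhdsGT_zero (hmono : MonotoneOn ν (Ioo 0 R))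
    (hlim : Tendsto ν (𝓝[>] 0) (𝓝 ν₀)) {r : ℝ} (hr : r ∈ Ioo 0 R) : ν₀ ≤ ν r := by
  refine le_of_tendsto hlim ?_
  filter_upwards [Ioo_mem_nhdsGT hr.1] with s hs
  exact hmono ⟨hs.1, hs.2.trans hr.2⟩ hr hs.2.le

theorem sub_half_nonneg (hmono : MonotoneOn ν (Ioo 0 R)) {s : ℝ} (hs : s ∈ Ioo 0 R) :
    0 ≤ ν s - ν (s / 2) :=
  sub_nonneg.2 <|
    hmono (div_mem_Ioo_of_one_le hs one_le_two) hs (div_le_self hs.1.le one_le_two)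

theorem hasSum_sub_div_two_pow (hmono : MonotoneOn ν (Ioo 0 R))
    (hlim : Tendsto ν (𝓝[>] 0) (𝓝 ν₀)) {r : ℝ} (hr : r ∈ Ioo 0 R) :
    HasSum (fun k : ℕ => ν (r / 2 ^ k) - ν (r / 2 ^ k / 2)) (ν r - ν₀) := by
  have hmem (k : ℕ) : r / 2 ^ k ∈ Ioo 0 R := div_mem_Ioo_of_one_le hr (one_le_pow₀ one_le_two)
  rw [hasSum_iff_tendsto_nat_of_nonneg fun k => hmono.sub_half_nonneg (hmem k)]
  have hpartial (n : ℕ) :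
      ∑ k ∈ Finset.range n, (ν (r / 2 ^ k) - ν (r / 2 ^ k / 2)) = ν r - ν (r / 2 ^ n) := by
    simpa [div_div, pow_succ] using Finset.sum_range_sub' (fun k => ν (r / 2 ^ k)) n
  simp only [hpartial]
  exact tendsto_const_nhds.sub (hlim.comp (tendsto_div_two_pow_nhdsGT_zero hr.1))

theorem ofReal_sub_div_eq_tsum (hmono : MonotoneOn ν (Ioo 0 R))
    (hlim : Tendsto ν (𝓝[>] 0) (𝓝 ν₀)) {r : ℝ} (hr : r ∈ Ioo 0 R) :
    ENNReal.ofReal ((ν r - ν₀) / r) =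
      ∑' k : ℕ, ENNReal.ofReal ((ν (r / 2 ^ k) - ν (r / 2 ^ k / 2)) / r) := by
  have hsum := (hmono.hasSum_sub_div_two_pow hlim hr).div_const r
  rw [← hsum.tsum_eq, ENNReal.ofReal_tsum_of_nonneg (fun k => ?_) hsum.summable]
  exact div_nonneg (hmono.sub_half_nonneg (div_mem_Ioo_of_one_le hr (one_le_pow₀ one_le_two)))
    hr.1.le

theorem aemeasurable_comp_div (hmono : MonotoneOn ν (Ioo 0 R)) {b c : ℝ} (hb : b ≤ R)
    (hc : 1 ≤ c) : AEMeasurable (fun r => ν (r / c)) (volume.restrict (Ioo 0 b)) :=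
  aemeasurable_restrict_of_monotoneOn measurableSet_Ioo fun _ hx _ hy hxy =>
    hmono (div_mem_Ioo_of_one_le ⟨hx.1, hx.2.trans_le hb⟩ hc)
      (div_mem_Ioo_of_one_le ⟨hy.1, hy.2.trans_le hb⟩ hc)
      (div_le_div_of_nonneg_right hxy (one_pos.le.trans hc))

theorem lintegral_sub_div_eq_tsum (hmono : MonotoneOn ν (Ioo 0 R))
    (hlim : Tendsto ν (𝓝[>] 0) (𝓝 ν₀)) {b : ℝ} (hb : b ≤ R) :
    ∫⁻ r in Ioo 0 b, ENNReal.ofReal ((ν r - ν₀) / r) =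
      ∑' k : ℕ, ∫⁻ s in Ioo 0 (b / 2 ^ k), ENNReal.ofReal ((ν s - ν (s / 2)) / s) := by
  have hmeas (k : ℕ) :
      AEMeasurable (fun r => ENNReal.ofReal ((ν (r / 2 ^ k) - ν (r / 2 ^ k / 2)) / r))
        (volume.restrict (Ioo 0 b)) := by
    have h2k : (1 : ℝ) ≤ 2 ^ k := one_le_pow₀ one_le_two
    have h2k' : (1 : ℝ) ≤ 2 ^ k * 2 :=
      h2k.trans (le_mul_of_one_le_right (by positivity) one_le_two)
    simp_rw [div_div]
    exact (((hmono.aemeasurable_comp_div hb h2k).sub (hmono.aemeasurable_comp_div hb h2k')).div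
      aemeasurable_id).ennreal_ofReal
  calc ∫⁻ r in Ioo 0 b, ENNReal.ofReal ((ν r - ν₀) / r)
      = ∫⁻ r in Ioo 0 b,
          ∑' k : ℕ, ENNReal.ofReal ((ν (r / 2 ^ k) - ν (r / 2 ^ k / 2)) / r) :=
        setLIntegral_congr_fun measurableSet_Ioo fun r hr =>
          hmono.ofReal_sub_div_eq_tsum hlim ⟨hr.1, hr.2.trans_le hb⟩
    _ = ∑' k : ℕ, ∫⁻ s in Ioo 0 (b / 2 ^ k), ENNReal.ofReal ((ν s - ν (s / 2)) / s) := by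
        rw [lintegral_tsum hmeas]
        exact tsum_congr fun k =>
          lintegral_Ioo_ofReal_comp_div_div (pow_pos two_pos k) b fun s => ν s - ν (s / 2)

end MonotoneOn

theorem tsum_indicator_Ioo_div_two_pow_le (f : ℝ → ℝ≥0∞) {b s : ℝ} (hs : 0 < s) :
    ∑' k : ℕ, (Ioo 0 (b / 2 ^ k)).indicator f s ≤ ⌈Real.logb 2 (b / s)⌉₊ * f s := by
  set N := ⌈Real.logb 2 (b / s)⌉₊
  have hvanish : ∀ k ∉ Finset.range N, (Ioo 0 (b / 2 ^ k)).indicator f s = 0 := by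
    intro k hk
    refine indicator_of_notMem (fun hsk => hk ?_) f
    have hpow : (2 : ℝ) ^ (k : ℝ) < b / s := by
      rw [Real.rpow_natCast, lt_div_iff₀ hs, mul_comm, ← lt_div_iff₀ (pow_pos two_pos k)]
      exact hsk.2
    exact Finset.mem_range.2 (Nat.lt_ceil.2 ((Real.lt_logb_iff_rpow_lt one_lt_two
      ((Real.rpow_pos_of_pos two_pos _).trans hpow)).2 hpow))
  rw [tsum_eq_sum hvanish]
  calc ∑ k ∈ Finset.range N, (Ioo 0 (b / 2 ^ k)).indicator f s
      ≤ ∑ _k ∈ Finset.range N, f s := Finset.sum_le_sum fun k _ => indicator_le_self _ f s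
    _ = N * f s := by simp

theorem natCeil_logb_two_div_le {b s : ℝ} (hs : 0 < s) (hsb : s < b) (hb : b < 1) :
    (⌈Real.logb 2 (b / s)⌉₊ : ℝ) ≤ ((Real.log 2)⁻¹ + (-Real.log b)⁻¹) * |Real.log s| := by
  have hlog2 : 0 < Real.log 2 := Real.log_pos one_lt_two
  have hlogb : Real.log b < 0 := Real.log_neg (hs.trans hsb) hb
  have hlogs : Real.log s < Real.log b := Real.log_lt_log hs hsb
  have hlogb2 : Real.logb 2 (b / s) ≤ -Real.log s / Real.log 2 := by
    rw [Real.logb, Real.log_div (hs.trans hsb).ne' hs.ne']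
    gcongr
    linarith
  have hone : 1 ≤ -Real.log s / -Real.log b := by
    rw [one_le_div (neg_pos.2 hlogb)]
    linarith
  calc (⌈Real.logb 2 (b / s)⌉₊ : ℝ)
      ≤ Real.logb 2 (b / s) + 1 :=
        (Nat.ceil_lt_add_one (Real.logb_nonneg one_lt_two ((one_le_div hs).2 hsb.le))).le
    _ ≤ -Real.log s / Real.log 2 + -Real.log s / -Real.log b := add_le_add hlogb2 hone
    _ = ((Real.log 2)⁻¹ + (-Real.log b)⁻¹) * |Real.log s| := by
        rw [abs_of_neg (hlogs.trans hlogb)]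
        ring

theorem tsum_lintegral_Ioo_div_two_pow_le {G : ℝ → ℝ≥0∞} {b : ℝ}
    (hG : AEMeasurable G (volume.restrict (Ioo 0 b))) (hb0 : 0 ≤ b) (hb : b < 1) :
    ∑' k : ℕ, ∫⁻ s in Ioo 0 (b / 2 ^ k), G s ≤
      ENNReal.ofReal ((Real.log 2)⁻¹ + (-Real.log b)⁻¹) *
        ∫⁻ s in Ioo 0 b, ENNReal.ofReal |Real.log s| * G s := by
  set C := (Real.log 2)⁻¹ + (-Real.log b)⁻¹
  have hC : 0 ≤ C := add_nonneg (inv_nonneg.2 (Real.log_nonneg one_le_two))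
    (inv_nonneg.2 (neg_nonneg.2 (Real.log_nonpos hb0 hb.le)))
  have hrestrict (k : ℕ) :
      ∫⁻ s in Ioo 0 (b / 2 ^ k), G s = ∫⁻ s in Ioo 0 b, (Ioo 0 (b / 2 ^ k)).indicator G s := by
    rw [lintegral_indicator measurableSet_Ioo, Measure.restrict_restrict measurableSet_Ioo,
      inter_eq_left.2 (Ioo_subset_Ioo_right (div_le_self hb0 (one_le_pow₀ one_le_two)))]
  calc ∑' k : ℕ, ∫⁻ s in Ioo 0 (b / 2 ^ k), G s
      = ∫⁻ s in Ioo 0 b, ∑' k : ℕ, (Ioo 0 (b / 2 ^ k)).indicator G s := by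
        rw [tsum_congr hrestrict, lintegral_tsum fun k => hG.indicator measurableSet_Ioo]
    _ ≤ ∫⁻ s in Ioo 0 b, ENNReal.ofReal C * (ENNReal.ofReal |Real.log s| * G s) := by
        refine setLIntegral_mono' measurableSet_Ioo fun s hs => ?_
        refine (tsum_indicator_Ioo_div_two_pow_le G hs.1).trans ?_
        rw [← mul_assoc, ← ENNReal.ofReal_mul hC, ← ENNReal.ofReal_natCast]
        gcongr
        exact natCeil_logb_two_div_le hs.1 hs.2 hb
    _ = ENNReal.ofReal C * ∫⁻ s in Ioo 0 b, ENNReal.ofReal |Real.log s| * G s :=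
        lintegral_const_mul' _ _ ENNReal.ofReal_ne_top

theorem stmt3_general (R r₀ ν₀ : ℝ) (hr₀ : 0 < r₀) (hr₀R : r₀ < min R 1)
    (ν : ℝ → ℝ) (hmono : MonotoneOn ν (Ioo 0 R))
    (hlim : Tendsto ν (𝓝[>] 0) (𝓝 ν₀))
    (hint : IntegrableOn (fun r => (ν r - ν (r / 2)) / r * |Real.log r|) (Ioo 0 r₀)) :
    IntegrableOn (fun r => (ν r - ν₀) / r) (Ioo 0 r₀) := by
  obtain ⟨hr₀R, hr₀1⟩ := lt_min_iff.1 hr₀R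
  have hν : AEMeasurable ν (volume.restrict (Ioo 0 r₀)) := by
    simpa using hmono.aemeasurable_comp_div hr₀R.le le_rfl
  have hincr : AEMeasurable (fun s => ENNReal.ofReal ((ν s - ν (s / 2)) / s))
      (volume.restrict (Ioo 0 r₀)) :=
    ((hν.sub (hmono.aemeasurable_comp_div hr₀R.le one_le_two)).div
      aemeasurable_id).ennreal_ofReal
  have hnonneg : 0 ≤ᵐ[volume.restrict (Ioo 0 r₀)] fun r => (ν r - ν₀) / r :=
    (ae_restrict_mem measurableSet_Ioo).mono fun r hr => div_nonneg
      (sub_nonneg.2 (hmono.le_of_tendsto_nhdsGT_zero hlim ⟨hr.1, hr.2.trans hr₀R⟩)) hr.1.le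
  refine ⟨((hν.sub_const ν₀).div aemeasurable_id).aestronglyMeasurable,
    (hasFiniteIntegral_iff_ofReal hnonneg).2 ?_⟩
  calc ∫⁻ r in Ioo 0 r₀, ENNReal.ofReal ((ν r - ν₀) / r)
      = ∑' k : ℕ, ∫⁻ s in Ioo 0 (r₀ / 2 ^ k), ENNReal.ofReal ((ν s - ν (s / 2)) / s) :=
        hmono.lintegral_sub_div_eq_tsum hlim hr₀R.le
    _ ≤ ENNReal.ofReal ((Real.log 2)⁻¹ + (-Real.log r₀)⁻¹) * ∫⁻ s in Ioo 0 r₀,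
          ENNReal.ofReal |Real.log s| * ENNReal.ofReal ((ν s - ν (s / 2)) / s) :=
        tsum_lintegral_Ioo_div_two_pow_le hincr hr₀.le hr₀1
    _ < ⊤ := by
        refine ENNReal.mul_lt_top ENNReal.ofReal_lt_top
          (lt_of_le_of_lt (lintegral_mono fun s => ?_) hint.2)
        rw [← ENNReal.ofReal_mul (abs_nonneg _), mul_comm]
        exact Real.ofReal_le_enorm _

theorem stmt3 (R r₀ ν₀ : ℝ) (hr₀ : 0 < r₀) (hr₀R : r₀ < min R 1)
    (ν : ℝ → ℝ) (hmono : MonotoneOn ν (Ioo 0 R))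
    (hnonneg : ∀ r ∈ Ioo (0:ℝ) R, 0 ≤ ν r)
    (hlim : Tendsto ν (𝓝[>] 0) (𝓝 ν₀))
    (hint : IntegrableOn (fun r => (ν r - ν (r / 2)) / r * |Real.log r|) (Ioo 0 r₀)) :
    IntegrableOn (fun r => (ν r - ν₀) / r) (Ioo 0 r₀) :=
  stmt3_general R r₀ ν₀ hr₀ hr₀R ν hmono hlim hint
end

section
/- Let u : (0, r₀] → [0, ∞) be measurable and suppose f : D*(0, r₀) → ℝ is C², bounded, radially symmetric (f(a) = F(|a|) for some F), and satisfies |Δf(a)| ≤ u(|a|) with ∫₀^{r₀} r|log r| u(r) dr < ∞. Then F(r) has a finite limit as r → 0⁺. -/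
open MeasureTheory Set Filter Topology

/-- The Laplacian of a function on `ℂ ≅ ℝ²`: sum of second derivatives in the
directions `1` and `I`. -/
noncomputable def laplacianC (f : ℂ → ℝ) (a : ℂ) : ℝ :=
  iteratedFDeriv ℝ 2 f a ![1, 1] + iteratedFDeriv ℝ 2 f a ![Complex.I, Complex.I]

/-! Along the radius the Laplacian is `s⁻¹ (s F')'`, so `H s = s * F' s` has a derivative
dominated by `s u(s)`, which is integrable against `|log s|`. Then `H` tends to some `c` at `0`,
and by Tonelli `F' s - c / s = s⁻¹ ∫₀ˢ H'` is integrable near `0`. Hence `F s - c log s`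
converges as `s → 0⁺`, and since `F` is bounded while `log s → -∞`, `c = 0`. -/

open intervalIntegral
open scoped ENNReal

theorem iteratedFDeriv_two_apply_self {E G : Type*} [NormedAddCommGroup E] [NormedSpace ℝ E]
    [NormedAddCommGroup G] [NormedSpace ℝ G] {f : E → G} {a : E} (hf : ContDiffAt ℝ 2 f a)
    (v : E) : iteratedFDeriv ℝ 2 f a ![v, v] = deriv (deriv fun t : ℝ => f (a + t • v)) 0 := by
  have hline : Tendsto (fun t : ℝ => a + t • v) (𝓝 0) (𝓝 a) :=
    (by fun_prop : Continuous fun t : ℝ => a + t • v).tendsto' 0 a (by simp)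
  have hdiff : ∀ᶠ t in 𝓝 (0 : ℝ), DifferentiableAt ℝ f (a + t • v) :=
    hline.eventually ((hf.eventually (by simp)).mono fun _ h => h.differentiableAt (by simp))
  have hderiv : deriv (fun t : ℝ => f (a + t • v)) =ᶠ[𝓝 0]
      fun t => iteratedFDeriv ℝ 1 f (a + t • v) fun _ => v :=
    hdiff.mono fun t ht => by simp only [ht.deriv_comp_add_smul, iteratedFDeriv_one_apply]
  have hvv : ![v, v] = fun _ => v := by ext i; fin_cases i <;> rfl
  rw [hderiv.deriv_eq, ContDiffAt.deriv_fderiv_add_smul (n := 1)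
    (by rw [zero_smul, add_zero]; exact hf), hvv]
  simp

theorem deriv_deriv_comp_sqrt_sq_add_sq {F : ℝ → ℝ} {r : ℝ} (hr : 0 < r)
    (hF : ContDiffAt ℝ 2 F r) :
    deriv (deriv fun t => F √(r ^ 2 + t ^ 2)) 0 = deriv F r / r := by
  set ψ : ℝ → ℝ := fun t => √(r ^ 2 + t ^ 2)
  have hψ_pos : ∀ t, 0 < ψ t := fun t => Real.sqrt_pos.2 (by positivity)
  have hψ0 : ψ 0 = r := by simp [ψ, Real.sqrt_sq hr.le]
  have hψ : ∀ t, HasDerivAt ψ (t / ψ t) t := by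
    intro t
    convert ((hasDerivAt_pow 2 t).const_add (r ^ 2)).sqrt (by positivity) using 1
    simp only [ψ]
    field_simp
    norm_num [mul_comm]
  have hF₁ : ∀ᶠ t in 𝓝 (0 : ℝ), DifferentiableAt ℝ F (ψ t) := by
    have hψc : Tendsto ψ (𝓝 0) (𝓝 r) := hψ0 ▸ (hψ 0).continuousAt.tendsto
    exact hψc.eventually ((hF.eventually (by simp)).mono fun _ h => h.differentiableAt (by simp))
  have hderiv : deriv (fun t => F (ψ t)) =ᶠ[𝓝 0] fun t => deriv F (ψ t) * (t / ψ t) :=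
    hF₁.mono fun t ht => (ht.hasDerivAt.comp t (hψ t)).deriv
  have hF₂ : HasDerivAt (fun t => deriv F (ψ t)) (deriv (deriv F) r * (0 / ψ 0)) 0 := by
    have h : HasDerivAt (deriv F) (deriv (deriv F) (ψ 0)) (ψ 0) := by
      rw [hψ0]
      exact ((hF.derivWithin (m := 1) (by norm_num)).differentiableAt (by simp)).hasDerivAt
    exact hψ0 ▸ h.comp 0 (hψ 0)
  have hq : HasDerivAt (fun t => t / ψ t) ((1 * ψ 0 - 0 * (0 / ψ 0)) / ψ 0 ^ 2) 0 :=
    (hasDerivAt_id 0).div (hψ 0) (hψ_pos 0).ne'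
  rw [hderiv.deriv_eq]
  refine (hF₂.mul hq).deriv.trans ?_
  rw [hψ0]
  field_simp
  ring

section Radial

variable {f : ℂ → ℝ} {F : ℝ → ℝ}

theorem eventuallyEq_comp_ofReal_of_radial (hf : ∀ a, f a = F ‖a‖) {r : ℝ} (hr : 0 < r) :
    F =ᶠ[𝓝 r] fun s => f s := by
  filter_upwards [eventually_gt_nhds hr] with s hs
  rw [hf, Complex.norm_real, Real.norm_of_nonneg hs.le]

theorem contDiffAt_of_radial {n : WithTop ℕ∞} (hf : ∀ a, f a = F ‖a‖) {r : ℝ} (hr : 0 < r)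
    (hfr : ContDiffAt ℝ n f r) : ContDiffAt ℝ n F r :=
  (hfr.comp r Complex.ofRealCLM.contDiff.contDiffAt).congr_of_eventuallyEq
    (eventuallyEq_comp_ofReal_of_radial hf hr)

theorem laplacianC_ofReal_of_radial (hf : ∀ a, f a = F ‖a‖) {r : ℝ} (hr : 0 < r)
    (hfr : ContDiffAt ℝ 2 f r) :
    laplacianC f r = deriv (deriv F) r + deriv F r / r := by
  have hF : ContDiffAt ℝ 2 F r := contDiffAt_of_radial hf hr hfr
  have h_one : (fun t : ℝ => f (r + t • (1 : ℂ))) =ᶠ[𝓝 0] fun t => F (r + t) := by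
    have : Tendsto (fun t : ℝ => r + t) (𝓝 0) (𝓝 r) := by
      simpa using (continuous_const_add r).tendsto (0 : ℝ)
    filter_upwards [this.eventually (eventuallyEq_comp_ofReal_of_radial hf hr)] with t ht
    simp [ht]
  have h_I : (fun t : ℝ => f (r + t • Complex.I)) = fun t => F √(r ^ 2 + t ^ 2) := by
    ext t
    rw [hf, Complex.real_smul, Complex.norm_add_mul_I]
  rw [laplacianC, iteratedFDeriv_two_apply_self hfr, iteratedFDeriv_two_apply_self hfr,
    h_one.deriv.deriv_eq, h_I, deriv_deriv_comp_sqrt_sq_add_sq hr hF,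
    funext (deriv_comp_const_add F r), deriv_comp_const_add, add_zero]

theorem hasDerivAt_mul_deriv_of_radial (hf : ∀ a, f a = F ‖a‖) {r : ℝ} (hr : 0 < r)
    (hfr : ContDiffAt ℝ 2 f r) :
    HasDerivAt (fun s => s * deriv F s) (r * laplacianC f r) r := by
  have hF' : DifferentiableAt ℝ (deriv F) r :=
    ((contDiffAt_of_radial hf hr hfr).derivWithin (m := 1) (by norm_num)).differentiableAt
      (by simp)
  rw [laplacianC_ofReal_of_radial hf hr hfr]
  refine ((hasDerivAt_id' r).mul hF'.hasDerivAt).congr_deriv ?_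
  field_simp
  ring

end Radial

section FTC

variable {G G' : ℝ → ℝ} {a b : ℝ}

theorem eq_add_integral_of_hasDerivAt_Ioc (hG : ∀ x ∈ Ioc a b, HasDerivAt G (G' x) x)
    (hG' : IntegrableOn G' (Ioc a b)) {x : ℝ} (hx : x ∈ Ioc a b) :
    G x = (G b - ∫ t in a..b, G' t) + ∫ t in a..x, G' t := by
  have hax : IntervalIntegrable G' volume a x :=
    (intervalIntegrable_iff_integrableOn_Ioc_of_le hx.1.le).2
      (hG'.mono_set (Ioc_subset_Ioc_right hx.2))
  have hxb : IntervalIntegrable G' volume x b :=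
    (intervalIntegrable_iff_integrableOn_Ioc_of_le hx.2).2
      (hG'.mono_set (Ioc_subset_Ioc_left hx.1.le))
  have hftc : ∫ t in x..b, G' t = G b - G x := by
    refine integral_eq_sub_of_hasDerivAt (fun t ht => hG t ?_) hxb
    rw [uIcc_of_le hx.2] at ht
    exact ⟨hx.1.trans_le ht.1, ht.2⟩
  rw [← integral_add_adjacent_intervals hax hxb, hftc]
  ring

theorem tendsto_nhdsGT_of_hasDerivAt_Ioc (hab : a < b) (hG : ∀ x ∈ Ioc a b, HasDerivAt G (G' x) x)
    (hG' : IntegrableOn G' (Ioc a b)) :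
    Tendsto G (𝓝[>] a) (𝓝 (G b - ∫ t in a..b, G' t)) := by
  have hprim : ContinuousWithinAt (fun x => ∫ t in a..x, G' t) (Icc a b) a := by
    refine continuousOn_primitive_interval ?_ |>.mono (uIcc_of_le hab.le).symm.subset a
      (left_mem_Icc.2 hab.le)
    rwa [uIcc_of_le hab.le, integrableOn_Icc_iff_integrableOn_Ioc]
  have hGT : 𝓝[>] a ≤ 𝓝[Icc a b] a := by
    rw [← nhdsWithin_Ioo_eq_nhdsGT hab]
    exact nhdsWithin_mono _ Ioo_subset_Icc_self
  have hlim := (hprim.tendsto.mono_left hGT).const_add (G b - ∫ t in a..b, G' t)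
  rw [integral_same, add_zero] at hlim
  refine hlim.congr' ?_
  filter_upwards [Ioo_mem_nhdsGT hab] with x hx
  exact (eq_add_integral_of_hasDerivAt_Ioc hG hG' (Ioo_subset_Ioc_self hx)).symm

end FTC

theorem eq_zero_of_tendsto_sub_mul_log {F : ℝ → ℝ} {c L M : ℝ}
    (hF : ∀ᶠ s in 𝓝[>] 0, |F s| ≤ M)
    (h : Tendsto (fun s => F s - c * Real.log s) (𝓝[>] 0) (𝓝 L)) : c = 0 := by
  by_contra hc
  have hcpos : 0 < |c| := abs_pos.2 hc
  set K := M + |L| + 1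
  have hbdd : ∀ᶠ s in 𝓝[>] (0 : ℝ), |c| * |Real.log s| ≤ K := by
    filter_upwards [hF, h.eventually (Metric.closedBall_mem_nhds L one_pos)] with s hs hsL
    rw [Real.dist_eq] at hsL
    rw [← abs_mul]
    calc |c * Real.log s| = |F s - (F s - c * Real.log s)| := by rw [sub_sub_cancel]
      _ ≤ K := by
        linarith [abs_sub (F s) (F s - c * Real.log s),
          abs_sub_abs_le_abs_sub (F s - c * Real.log s) L]
  have hlog : ∀ᶠ s in 𝓝[>] (0 : ℝ), Real.log s < -(K / |c|) :=
    Real.tendsto_log_nhdsGT_zero.eventually_lt_atBot _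
  obtain ⟨s, hs, hlogs⟩ := (hbdd.and hlog).exists
  have : K / |c| < |Real.log s| := by linarith [neg_le_abs (Real.log s)]
  linarith [(div_lt_iff₀' hcpos).1 this]

theorem lintegral_Ici_inter_Ioc_inv {t b : ℝ} (ht : 0 < t) (htb : t ≤ b) :
    ∫⁻ s in Ici t ∩ Ioc 0 b, ENNReal.ofReal s⁻¹ = ENNReal.ofReal (Real.log (b / t)) := by
  have hset : Ici t ∩ Ioc 0 b = Icc t b := by
    ext s
    simp only [mem_inter_iff, mem_Ici, mem_Ioc, mem_Icc]
    exact ⟨fun h => ⟨h.1, h.2.2⟩, fun h => ⟨h.1, ht.trans_le h.1, h.2⟩⟩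
  have hpos : ∀ s ∈ Icc t b, 0 < s := fun s hs => ht.trans_le hs.1
  rw [hset, ← ofReal_integral_eq_lintegral_ofReal, integral_Icc_eq_integral_Ioc,
    ← integral_of_le htb, integral_inv_of_pos ht (ht.trans_le htb)]
  · exact (continuousOn_inv₀.mono fun s hs => (hpos s hs).ne').integrableOn_compact isCompact_Icc
  · exact (ae_restrict_mem measurableSet_Icc).mono fun s hs => inv_nonneg.2 (hpos s hs).le

theorem lintegral_Ioc_inv_mul_lintegral_Ioc {g : ℝ → ℝ≥0∞} (hg : Measurable g) (b : ℝ) :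
    ∫⁻ s in Ioc 0 b, ENNReal.ofReal s⁻¹ * ∫⁻ t in Ioc 0 s, g t =
      ∫⁻ t in Ioc 0 b, ENNReal.ofReal (Real.log (b / t)) * g t := by
  set k : ℝ → ℝ → ℝ≥0∞ := fun s t => ENNReal.ofReal s⁻¹ * (Iic s).indicator g t
  have hk : Measurable (Function.uncurry k) := by
    have : Function.uncurry k = fun p : ℝ × ℝ =>
        ENNReal.ofReal p.1⁻¹ * {p : ℝ × ℝ | p.2 ≤ p.1}.indicator (fun p => g p.2) p := by
      ext ⟨s, t⟩; simp [k, Set.indicator_apply]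
    rw [this]
    exact measurable_fst.inv.ennreal_ofReal.mul
      ((hg.comp measurable_snd).indicator (measurableSet_le measurable_snd measurable_fst))
  calc ∫⁻ s in Ioc 0 b, ENNReal.ofReal s⁻¹ * ∫⁻ t in Ioc 0 s, g t
      = ∫⁻ s in Ioc 0 b, ∫⁻ t in Ioc 0 b, k s t := by
        refine setLIntegral_congr_fun measurableSet_Ioc fun s hs => ?_
        rw [lintegral_const_mul' _ _ ENNReal.ofReal_ne_top, lintegral_indicator measurableSet_Iic,
          Measure.restrict_restrict measurableSet_Iic, Iic_inter_Ioc_of_le hs.2]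
    _ = ∫⁻ t in Ioc 0 b, ∫⁻ s in Ioc 0 b, k s t := lintegral_lintegral_swap hk.aemeasurable
    _ = ∫⁻ t in Ioc 0 b, ENNReal.ofReal (Real.log (b / t)) * g t := by
        refine setLIntegral_congr_fun measurableSet_Ioc fun t ht => ?_
        have hk_t : (fun s => k s t) = (Ici t).indicator fun s => ENNReal.ofReal s⁻¹ * g t := by
          ext s; by_cases hts : t ≤ s <;> simp [k, hts]
        rw [hk_t, lintegral_indicator measurableSet_Ici,
          Measure.restrict_restrict measurableSet_Ici,
          lintegral_mul_const _ measurable_inv.ennreal_ofReal,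
          lintegral_Ici_inter_Ioc_inv ht.1 ht.2]

theorem integrableOn_inv_mul_integral_of_integrableOn_log_mul {φ : ℝ → ℝ} {b : ℝ}
    (hφ_meas : Measurable φ) (hφ : IntegrableOn φ (Ioc 0 b))
    (hlog : IntegrableOn (fun t => Real.log t * φ t) (Ioc 0 b)) :
    IntegrableOn (fun s => s⁻¹ * ∫ t in Ioc 0 s, φ t) (Ioc 0 b) := by
  have hcont : ContinuousOn (fun s => s⁻¹ * ∫ t in Ioc 0 s, φ t) (Ioc 0 b) :=
    (continuousOn_inv₀.mono fun s hs => hs.1.ne').mul <|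
      (continuousOn_primitive ((integrableOn_Icc_iff_integrableOn_Ioc (by simp)).2 hφ)).mono
        Ioc_subset_Icc_self
  refine ⟨hcont.aestronglyMeasurable measurableSet_Ioc, ?_⟩
  have hlog_div : IntegrableOn (fun t => Real.log (b / t) * φ t) (Ioc 0 b) := by
    refine IntegrableOn.congr_fun ((hφ.const_mul (Real.log b)).sub hlog) (fun t ht => ?_)
      measurableSet_Ioc
    rw [Pi.sub_apply, Real.log_div (ht.1.trans_le ht.2).ne' ht.1.ne']
    ring
  calc ∫⁻ s in Ioc 0 b, ‖s⁻¹ * ∫ t in Ioc 0 s, φ t‖ₑ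
      ≤ ∫⁻ s in Ioc 0 b, ENNReal.ofReal s⁻¹ * ∫⁻ t in Ioc 0 s, ‖φ t‖ₑ := by
        refine setLIntegral_mono' measurableSet_Ioc fun s hs => ?_
        rw [enorm_mul, Real.enorm_eq_ofReal (inv_nonneg.2 hs.1.le)]
        gcongr
        exact enorm_integral_le_lintegral_enorm _
    _ = ∫⁻ t in Ioc 0 b, ‖Real.log (b / t) * φ t‖ₑ := by
        rw [lintegral_Ioc_inv_mul_lintegral_Ioc hφ_meas.enorm]
        refine setLIntegral_congr_fun measurableSet_Ioc fun t ht => ?_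
        rw [enorm_mul, Real.enorm_eq_ofReal (Real.log_nonneg ((one_le_div ht.1).2 ht.2))]
    _ < ⊤ := hlog_div.2

theorem integrableOn_Ioc_of_integrableOn_log_mul {g : ℝ → ℝ} {b : ℝ} (hb : b < 1)
    (hlog : IntegrableOn (fun t => Real.log t * g t) (Ioc 0 b)) : IntegrableOn g (Ioc 0 b) := by
  have hlog_neg : ∀ t ∈ Ioc 0 b, Real.log t < 0 := fun t ht => Real.log_neg ht.1 (ht.2.trans_lt hb)
  have hbound : ∀ᵐ t ∂volume.restrict (Ioc 0 b), ‖(Real.log t)⁻¹‖ ≤ |Real.log b|⁻¹ := by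
    refine (ae_restrict_mem measurableSet_Ioc).mono fun t ht => ?_
    have hlog_b := hlog_neg b ⟨ht.1.trans_le ht.2, le_rfl⟩
    rw [norm_inv, Real.norm_eq_abs, abs_of_neg (hlog_neg t ht), abs_of_neg hlog_b]
    exact inv_anti₀ (neg_pos.2 hlog_b) (neg_le_neg (Real.log_le_log ht.1 ht.2))
  refine IntegrableOn.congr_fun (hlog.bdd_mul Real.measurable_log.inv.aestronglyMeasurable hbound)
    (fun t ht => ?_) measurableSet_Ioc
  rw [Pi.inv_apply, ← mul_assoc, inv_mul_cancel₀ (hlog_neg t ht).ne, one_mul]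

theorem exists_tendsto_nhdsGT_zero_of_abs_deriv_mul_deriv_le {F g : ℝ → ℝ} {b M : ℝ} (hb : 0 < b)
    (hF : ∀ s ∈ Ioc 0 b, DifferentiableAt ℝ F s)
    (hH : ∀ s ∈ Ioc 0 b, DifferentiableAt ℝ (fun s => s * deriv F s) s)
    (hHg : ∀ s ∈ Ioc 0 b, |deriv (fun s => s * deriv F s) s| ≤ g s)
    (hg : IntegrableOn g (Ioc 0 b)) (hg_log : IntegrableOn (fun t => Real.log t * g t) (Ioc 0 b))
    (hF_bdd : ∀ s ∈ Ioc 0 b, |F s| ≤ M) :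
    ∃ L, Tendsto F (𝓝[>] 0) (𝓝 L) := by
  set H := fun s => s * deriv F s
  have hH'_meas : Measurable (deriv H) := measurable_deriv H
  have hH'_le : ∀ᵐ t ∂volume.restrict (Ioc 0 b), |deriv H t| ≤ g t :=
    (ae_restrict_mem measurableSet_Ioc).mono hHg
  have hH' : IntegrableOn (deriv H) (Ioc 0 b) := hg.mono' hH'_meas.aestronglyMeasurable hH'_le
  have hlogH' : IntegrableOn (fun t => Real.log t * deriv H t) (Ioc 0 b) := by
    refine Integrable.mono hg_log (Real.measurable_log.mul hH'_meas).aestronglyMeasurable <|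
      hH'_le.mono fun t ht => ?_
    simp only [norm_mul, Real.norm_eq_abs]
    exact mul_le_mul_of_nonneg_left (ht.trans (le_abs_self _)) (abs_nonneg _)
  set c := H b - ∫ t in 0..b, deriv H t
  have hHc : ∀ s ∈ Ioc 0 b, H s - c = ∫ t in Ioc 0 s, deriv H t := fun s hs => by
    rw [eq_add_integral_of_hasDerivAt_Ioc (fun t ht => (hH t ht).hasDerivAt) hH' hs,
      add_sub_cancel_left, integral_of_le hs.1.le]
  have hquot : IntegrableOn (fun s => deriv F s - c * s⁻¹) (Ioc 0 b) := by
    refine (integrableOn_inv_mul_integral_of_integrableOn_log_mul hH'_meas hH' hlogH').congr_fun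
      (fun s hs => ?_) measurableSet_Ioc
    dsimp only
    rw [← hHc s hs]
    simp only [H]
    field_simp [hs.1.ne']
  have hlim := tendsto_nhdsGT_of_hasDerivAt_Ioc hb (G := fun s => F s - c * Real.log s)
    (fun s hs => (hF s hs).hasDerivAt.sub ((Real.hasDerivAt_log hs.1.ne').const_mul c)) hquot
  have hF_bdd' : ∀ᶠ s in 𝓝[>] 0, |F s| ≤ M := by
    filter_upwards [Ioc_mem_nhdsGT hb] using hF_bdd
  rw [eq_zero_of_tendsto_sub_mul_log hF_bdd' hlim] at hlim
  exact ⟨_, by simpa using hlim⟩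

theorem stmt13_general (r₀ : ℝ) (hr₀ : 0 < r₀) (u : ℝ → ℝ)
    (hu_int : IntegrableOn (fun r => r * |Real.log r| * u r) (Ioc 0 r₀))
    (f : ℂ → ℝ) (F : ℝ → ℝ)
    (hf_radial : ∀ a : ℂ, f a = F (‖a‖))
    (hf_C2 : ContDiffOn ℝ 2 f {a : ℂ | 0 < ‖a‖ ∧ ‖a‖ < r₀})
    (hf_bdd : ∃ M : ℝ, ∀ a ∈ {a : ℂ | 0 < ‖a‖ ∧ ‖a‖ < r₀}, |f a| ≤ M)
    (hf_lap : ∀ a ∈ {a : ℂ | 0 < ‖a‖ ∧ ‖a‖ < r₀},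
      |laplacianC f a| ≤ u (‖a‖)) :
    ∃ L : ℝ, Tendsto F (𝓝[>] (0:ℝ)) (𝓝 L) := by
  obtain ⟨M, hM⟩ := hf_bdd
  obtain ⟨b, hb, hb_lt⟩ := exists_between (lt_min hr₀ one_pos)
  obtain ⟨hb_r₀, hb_one⟩ := lt_min_iff.1 hb_lt
  have hmem : ∀ s ∈ Ioc 0 b, (s : ℂ) ∈ {a : ℂ | 0 < ‖a‖ ∧ ‖a‖ < r₀} := fun s hs =>
    ⟨by simpa using hs.1.ne', by simpa [abs_of_pos hs.1] using hs.2.trans_lt hb_r₀⟩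
  have hf_at : ∀ s ∈ Ioc 0 b, ContDiffAt ℝ 2 f s := fun s hs =>
    hf_C2.contDiffAt ((isOpen_Ioo.preimage continuous_norm).mem_nhds (hmem s hs))
  have hH : ∀ s ∈ Ioc 0 b, HasDerivAt (fun s => s * deriv F s) (s * laplacianC f s) s :=
    fun s hs => hasDerivAt_mul_deriv_of_radial hf_radial hs.1 (hf_at s hs)
  have hg_log : IntegrableOn (fun t => Real.log t * (t * u t)) (Ioc 0 b) := by
    refine IntegrableOn.congr_fun (hu_int.mono_set (Ioc_subset_Ioc_right hb_r₀.le)).neg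
      (fun t ht => ?_) measurableSet_Ioc
    rw [Pi.neg_apply, abs_of_neg (Real.log_neg ht.1 (ht.2.trans_lt hb_one))]
    ring
  refine exists_tendsto_nhdsGT_zero_of_abs_deriv_mul_deriv_le (M := M) hb
    (fun s hs => (contDiffAt_of_radial hf_radial hs.1 (hf_at s hs)).differentiableAt (by simp))
    (fun s hs => (hH s hs).differentiableAt) (fun s hs => ?_)
    (integrableOn_Ioc_of_integrableOn_log_mul hb_one hg_log) hg_log (fun s hs => ?_)
  · have hlap := hf_lap s (hmem s hs)
    rw [Complex.norm_real, Real.norm_of_nonneg hs.1.le] at hlap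
    rw [(hH s hs).deriv, abs_mul, abs_of_pos hs.1]
    exact mul_le_mul_of_nonneg_left hlap hs.1.le
  · simpa [hf_radial, Real.norm_of_nonneg hs.1.le] using hM s (hmem s hs)

theorem stmt13 (r₀ : ℝ) (hr₀ : 0 < r₀) (u : ℝ → ℝ)
    (hu_meas : Measurable u) (hu_nonneg : ∀ r ∈ Ioc (0:ℝ) r₀, 0 ≤ u r)
    (hu_int : IntegrableOn (fun r => r * |Real.log r| * u r) (Ioc 0 r₀))
    (f : ℂ → ℝ) (F : ℝ → ℝ)
    (hf_radial : ∀ a : ℂ, f a = F (‖a‖))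
    (hf_C2 : ContDiffOn ℝ 2 f {a : ℂ | 0 < ‖a‖ ∧ ‖a‖ < r₀})
    (hf_bdd : ∃ M : ℝ, ∀ a ∈ {a : ℂ | 0 < ‖a‖ ∧ ‖a‖ < r₀}, |f a| ≤ M)
    (hf_lap : ∀ a ∈ {a : ℂ | 0 < ‖a‖ ∧ ‖a‖ < r₀},
      |laplacianC f a| ≤ u (‖a‖)) :
    ∃ L : ℝ, Tendsto F (𝓝[>] (0:ℝ)) (𝓝 L) :=
  stmt13_general r₀ hr₀ u hu_int f F hf_radial hf_C2 hf_bdd hf_lap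
end
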